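/- No after-commit interference when no more swaps are enabled (Lemma 5): in the block-labelled execution setting, assume every block in the range of block is committed and no adjacent pair of T is swappable. Then no block b has an after-commit interference, i.e., there are no elements v, x ∈ T with block(v) = b, block(x) ≠ b, and commit(b) < x < v. -/
import Mathlib


/-- Mover labels assigned to transitions: right mover, non-mover, left mover. -/
inductive Label where
  | R | N | L
deriving DecidableEq

open Classical in
/-- The label of a transition `t`: `R` if its block is uncommitted or `t` precedes the
commit transition of its block; `N` if `t` is the commit transition of its (committed)
block; `L` if `t` follows the commit transition of its (committed) block. -/
noncomputable def label {T β : Type*} [LinearOrder T]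
    (block : T → β) (Com : Set β) (commit : β → T) (t : T) : Label :=
  if block t ∈ Com then
    if t < commit (block t) then .R
    else if t = commit (block t) then .N
    else .L
  else .R

/-- The pair `(a, b)` (with `a < b` in execution order) is swappable. The linear order
on `β` plays the role of the arbitrary fixed total order `<_O` on blocks. -/
def Swappable {T β : Type*} [LinearOrder T] [LinearOrder β]
    (block : T → β) (Com : Set β) (commit : β → T) (a b : T) : Prop :=
  (block a ∉ Com ∧ block b ∈ Com) ∨
  (block a ∈ Com ∧ block b ∈ Com ∧ commit (block b) < commit (block a)) ∨
  (block a ∉ Com ∧ block b ∉ Com ∧ block b < block a)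

/-- Elements `a < b` are adjacent if no element lies strictly between them. -/
def Adjacent {T : Type*} [LinearOrder T] (a b : T) : Prop :=
  a < b ∧ ¬ ∃ c, a < c ∧ c < b

/-- No after-commit interference when no more swaps are enabled: if every block in the
range of `block` is committed and no adjacent pair is swappable, then no block has an
after-commit interference. -/
theorem no_after_commit_interference {T β : Type*} [LinearOrder T] [Fintype T]
    [LinearOrder β]
    (block : T → β) (Com : Set β) (commit : β → T)
    (hcommit : ∀ b ∈ Com, (∃ t, block t = b) → block (commit b) = b)
    (hall : ∀ b ∈ Set.range block, b ∈ Com)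
    (hnoswap : ∀ a b : T, Adjacent a b → ¬ Swappable block Com commit a b) :
    ¬ ∃ (b : β) (v x : T), block v = b ∧ block x ≠ b ∧ commit b < x ∧ x < v := by
  letI : LocallyFiniteOrder T := Fintype.toLocallyFiniteOrder
  have hCom : ∀ t : T, block t ∈ Com := fun t => hall _ ⟨t, rfl⟩
  have hbc : ∀ t : T, block (commit (block t)) = block t :=
    fun t => hcommit _ (hCom t) ⟨t, rfl⟩
  -- adjacent step: commit ∘ block is monotone across adjacent pairs
  have step : ∀ a b : T, Adjacent a b → commit (block a) ≤ commit (block b) := by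
    intro a b hadj
    have h := hnoswap a b hadj
    by_contra hlt
    exact h (Or.inr (Or.inl ⟨hCom a, hCom b, lt_of_not_ge hlt⟩))
  -- monotonicity by induction on the number of elements strictly between
  have mono : ∀ n : ℕ, ∀ a b : T, (Finset.Ioo a b).card ≤ n → a < b →
      commit (block a) ≤ commit (block b) := by
    intro n
    induction n with
    | zero =>
      intro a b hc hab
      have hempty : Finset.Ioo a b = ∅ := Finset.card_eq_zero.mp (Nat.le_zero.mp hc)
      refine step a b ⟨hab, ?_⟩
      rintro ⟨c, hc1, hc2⟩
      have : c ∈ Finset.Ioo a b := Finset.mem_Ioo.mpr ⟨hc1, hc2⟩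
      simp [hempty] at this
    | succ n ih =>
      intro a b hc hab
      rcases Finset.eq_empty_or_nonempty (Finset.Ioo a b) with hempty | ⟨c, hcmem⟩
      · refine step a b ⟨hab, ?_⟩
        rintro ⟨c, hc1, hc2⟩
        have : c ∈ Finset.Ioo a b := Finset.mem_Ioo.mpr ⟨hc1, hc2⟩
        simp [hempty] at this
      · obtain ⟨hac, hcb⟩ := Finset.mem_Ioo.mp hcmem
        have hsub1 : Finset.Ioo a c ⊂ Finset.Ioo a b := by
          refine ⟨Finset.Ioo_subset_Ioo le_rfl hcb.le, fun hsub => ?_⟩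
          have := hsub hcmem
          simp [Finset.mem_Ioo] at this
        have hsub2 : Finset.Ioo c b ⊂ Finset.Ioo a b := by
          refine ⟨Finset.Ioo_subset_Ioo hac.le le_rfl, fun hsub => ?_⟩
          have := hsub hcmem
          simp [Finset.mem_Ioo] at this
        have h1 : (Finset.Ioo a c).card ≤ n :=
          Nat.lt_succ_iff.mp (lt_of_lt_of_le (Finset.card_lt_card hsub1) hc)
        have h2 : (Finset.Ioo c b).card ≤ n :=
          Nat.lt_succ_iff.mp (lt_of_lt_of_le (Finset.card_lt_card hsub2) hc)
        exact le_trans (ih a c h1 hac) (ih c b h2 hcb)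
  have mono' : ∀ a b : T, a ≤ b → commit (block a) ≤ commit (block b) := by
    intro a b hab
    rcases eq_or_lt_of_le hab with rfl | h
    · exact le_rfl
    · exact mono _ a b le_rfl h
  rintro ⟨b, v, x, hv, hx, hcx, hxv⟩
  subst hv
  have hc : commit (block x) = commit (block v) := by
    have h1 : commit (block (commit (block v))) ≤ commit (block x) :=
      mono' _ _ hcx.le
    rw [hbc v] at h1
    exact le_antisymm (mono' x v hxv.le) h1
  apply hx
  calc block x = block (commit (block x)) := (hbc x).symm
    _ = block (commit (block v)) := by rw [hc]
    _ = block v := hbc v
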